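/- arXiv:1802.08604 — 6 statements merged into one kernel-verified Lean document; each statement's English description precedes it below -/
import Mathlib

section
/- Let γ > 0, b > 0, p > 0, p₂ ≥ p, and q_max > b + p/γ. Define G(q) = -γ/2·q² + (γb + p)q for 0 ≤ q ≤ b + p/γ and G(q) = p²/(2γ) + γb²/2 + pb otherwise. The maximizer of J(q) = G(q) - pq + p₂·max(b - q, 0) over [0, q_max] is q° = max(b - p₂/γ, 0). -/
/-!
Write `c = b + p/γ` and `F q = G q - p q`. Then `F q = γb²/2 - γ/2 (min q c - b)² - p (q - c)₊`,
so `F ≤ γb²/2` everywhere and `F q = γb²/2 - γ/2 (b - q)²` for `q ≤ b`. Hence, with `s = b - q`,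
the objective is `γb²/2 + (p₂ s - γ/2 s²)` on `[0, b]` and at most `γb²/2` on `[b, ∞)`. The concave
parabola `p₂ s - γ/2 s²` is maximal on `s ≤ b` at `s = min (p₂/γ) b`, i.e. at `q = max (b - p₂/γ) 0`.
-/

open Set

theorem isMaxOn_parabola_Iic {a γ b : ℝ} (hγ : 0 < γ) :
    IsMaxOn (fun s => a * s - γ / 2 * s ^ 2) (Iic b) (min (a / γ) b) := by
  intro s (hs : s ≤ b)
  obtain ⟨t, rfl⟩ : ∃ t, a = γ * t := ⟨a / γ, by field_simp⟩
  rw [mul_div_cancel_left₀ t hγ.ne']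
  show γ * t * s - γ / 2 * s ^ 2 ≤ γ * t * min t b - γ / 2 * min t b ^ 2
  rcases le_total t b with htb | hbt
  · rw [min_eq_left htb]
    linarith [mul_nonneg hγ.le (sq_nonneg (s - t))]
  · rw [min_eq_right hbt]
    have hγb : γ * b ≤ γ * t := by gcongr
    linarith [mul_nonneg (sub_nonneg.2 hs) (sub_nonneg.2 hγb), mul_nonneg hγ.le (sq_nonneg (b - s))]

theorem sub_mul_eq_of_saturating {γ b p : ℝ} {G : ℝ → ℝ} (hγ : γ ≠ 0)
    (hG : ∀ q, G q = if q ≤ b + p / γ then -γ/2 * q^2 + (γ*b + p) * q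
                     else p^2/(2*γ) + γ*b^2/2 + p*b) (q : ℝ) :
    G q - p * q = γ * b ^ 2 / 2 - γ / 2 * (min q (b + p / γ) - b) ^ 2
      - p * max (q - (b + p / γ)) 0 := by
  rw [hG]
  split_ifs with hq
  · rw [min_eq_left hq, max_eq_right (by linarith)]
    ring
  · rw [min_eq_right (by linarith), max_eq_left (by linarith)]
    field_simp
    ring

theorem stmt1_general (γ b p p₂ qmax : ℝ) (hγ : 0 < γ) (hb : 0 < b) (hp : 0 < p)
    (hp₂ : p ≤ p₂)
    (G : ℝ → ℝ)
    (hG : ∀ q, G q = if q ≤ b + p / γ then -γ/2 * q^2 + (γ*b + p) * q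
                     else p^2/(2*γ) + γ*b^2/2 + p*b) :
    IsMaxOn (fun q => G q - p*q + p₂ * max (b - q) 0) (Set.Icc 0 qmax)
      (max (b - p₂/γ) 0) := by
  have hF := sub_mul_eq_of_saturating hγ.ne' hG
  have hc : b ≤ b + p / γ := le_add_of_nonneg_right (by positivity)
  have hJ_of_le : ∀ q ≤ b, G q - p * q + p₂ * max (b - q) 0
      = γ * b ^ 2 / 2 + (p₂ * (b - q) - γ / 2 * (b - q) ^ 2) := fun q hq => by
    rw [hF, min_eq_left (hq.trans hc), max_eq_right (by linarith), max_eq_left (by linarith)]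
    ring
  have hmin_nonneg : 0 ≤ min (p₂ / γ) b := le_min (div_nonneg (hp.le.trans hp₂) hγ.le) hb.le
  have hopt : max (b - p₂ / γ) 0 = b - min (p₂ / γ) b := by
    rw [← max_sub_sub_left, sub_self]
  have hmax : ∀ s ≤ b, p₂ * s - γ / 2 * s ^ 2
      ≤ p₂ * min (p₂ / γ) b - γ / 2 * min (p₂ / γ) b ^ 2 :=
    fun s hs => isMaxOn_parabola_Iic hγ hs
  intro q ⟨hq0, _⟩
  rw [mem_ofPred_eq]; beta_reduce
  rw [hopt, hJ_of_le (b - min (p₂ / γ) b) (by linarith), sub_sub_cancel]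
  rcases le_total q b with hqb | hbq
  · rw [hJ_of_le q hqb]
    linarith [hmax (b - q) (by linarith)]
  · rw [hF, max_eq_right (sub_nonpos.2 hbq)]
    linarith [hmax 0 hb.le, mul_nonneg hγ.le (sq_nonneg (min q (b + p / γ) - b)),
      mul_nonneg hp.le (le_max_right (q - (b + p / γ)) 0)]

/-- The maximizer of J(q) = G(q) - pq + p₂·max(b - q, 0) over [0, q_max]
is q° = max(b - p₂/γ, 0). -/
theorem stmt1 (γ b p p₂ qmax : ℝ) (hγ : 0 < γ) (hb : 0 < b) (hp : 0 < p)
    (hp₂ : p ≤ p₂) (hqmax : b + p / γ < qmax)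
    (G : ℝ → ℝ)
    (hG : ∀ q, G q = if q ≤ b + p / γ then -γ/2 * q^2 + (γ*b + p) * q
                     else p^2/(2*γ) + γ*b^2/2 + p*b) :
    IsMaxOn (fun q => G q - p*q + p₂ * max (b - q) 0) (Set.Icc 0 qmax)
      (max (b - p₂/γ) 0) :=
  stmt1_general γ b p p₂ qmax hγ hb hp hp₂ G hG
end

section
/- Let γ > 0, b > 0, p > 0, q_max > b + p/γ, and let b̂ ∈ [0, q_max] be the reported baseline. The maximizer of H(q) = G(q) - p·max(b̂, q) over q ∈ [0, q_max], where G(q) = -γ/2·q² + (γb + p)q for q ≤ b + p/γ and constant p²/(2γ) + γb²/2 + pb thereafter, is: q* = b if b̂ ≤ b; q* = b̂ if b < b̂ ≤ b + p/γ; and q* = b + p/γ if b̂ > b + p/γ. -/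
open Set

/-! The utility rises up to the saturation point `c = b + p / γ` and is flat beyond it, while the
net utility `G q - p q` peaks at the true baseline `b` and falls after it. Under "buy the baseline"
the consumer pays `p · max b̂ q`: below `b̂` consumption is free, so he moves up along `G` as far as
`b̂` (or `c`), and above `b̂` he pays `p` per unit, so he never goes past `max b̂ b`. -/

noncomputable def satUtility (γ b p q : ℝ) : ℝ :=
  if q ≤ b + p / γ then -γ/2 * q^2 + (γ*b + p) * q else p^2/(2*γ) + γ*b^2/2 + p*b

namespace satUtility

variable {γ b p : ℝ}

theorem eq_sq (hγ : γ ≠ 0) (q : ℝ) : satUtility γ b p q =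
    if q ≤ b + p / γ then γ / 2 * ((b + p / γ)^2 - (b + p / γ - q)^2) else γ / 2 * (b + p / γ)^2 := by
  unfold satUtility
  split_ifs <;> field_simp <;> ring

theorem mul_saturation_sub (hγ : γ ≠ 0) : γ * (b + p / γ - b) = p := by
  field_simp; ring

theorem monotone (hγ : 0 < γ) : Monotone (satUtility γ b p) := by
  intro x y hxy
  simp only [eq_sq hγ.ne']
  split_ifs with hx hy hy
  · nlinarith [mul_le_mul_of_nonneg_left (by linarith : x + y ≤ 2 * (b + p / γ)) hγ.le]
  · nlinarith [sq_nonneg (b + p / γ - x)]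
  · exact absurd (hxy.trans hy) hx
  · exact le_rfl

theorem isMaxOn_saturation (hγ : 0 < γ) : IsMaxOn (satUtility γ b p) univ (b + p / γ) := by
  refine isMaxOn_univ_iff.mpr fun q => ?_
  simp only [eq_sq hγ.ne', le_refl, if_true]
  split_ifs <;> nlinarith [sq_nonneg (b + p / γ - q)]

theorem antitoneOn_sub_mul (hγ : 0 < γ) (hp : 0 ≤ p) :
    AntitoneOn (fun q => satUtility γ b p q - p * q) (Ici b) := by
  intro x hx y hy hxy
  rw [mem_Ici] at hx hy
  simp only [eq_sq hγ.ne']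
  set c := b + p / γ
  have hp' : γ * (c - b) = p := mul_saturation_sub hγ.ne'
  split_ifs with hy' hx' hx'
  · rw [← hp']
    nlinarith [mul_le_mul_of_nonneg_left (by linarith : x + y ≥ 2 * b) hγ.le]
  · exact absurd (hxy.trans hy') hx'
  · have hsq : (c - x) ^ 2 ≤ (c - b) * (y - x) := by
      rw [sq]; exact mul_le_mul (by linarith) (by linarith) (by linarith) (by linarith)
    rw [← hp']
    nlinarith [mul_le_mul_of_nonneg_left hsq hγ.le]
  · linarith [mul_le_mul_of_nonneg_left hxy hp]

theorem isMaxOn_sub_mul (hγ : 0 < γ) (hp : 0 ≤ p) :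
    IsMaxOn (fun q => satUtility γ b p q - p * q) univ b := by
  refine isMaxOn_univ_iff.mpr fun q => ?_
  rcases le_total b q with hq | hq
  · exact antitoneOn_sub_mul hγ hp (mem_Ici.2 le_rfl) (mem_Ici.2 hq) hq
  · have hbc : b ≤ b + p / γ := le_add_of_nonneg_right (div_nonneg hp hγ.le)
    simp only [eq_sq hγ.ne', if_pos hbc, if_pos (hq.trans hbc)]
    set c := b + p / γ
    have hp' : γ * (c - b) = p := mul_saturation_sub hγ.ne'
    rw [← hp']
    nlinarith [mul_nonneg hγ.le (sq_nonneg (b - q))]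

end satUtility

theorem stmt2_general (γ b p qmax bhat : ℝ) (hγ : 0 < γ) (hp : 0 < p)
    (G : ℝ → ℝ)
    (hG : ∀ q, G q = if q ≤ b + p / γ then -γ/2 * q^2 + (γ*b + p) * q
                     else p^2/(2*γ) + γ*b^2/2 + p*b) :
    (bhat ≤ b → IsMaxOn (fun q => G q - p * max bhat q) (Set.Icc 0 qmax) b) ∧
    (b < bhat → bhat ≤ b + p/γ → IsMaxOn (fun q => G q - p * max bhat q) (Set.Icc 0 qmax) bhat) ∧
    (b + p/γ < bhat → IsMaxOn (fun q => G q - p * max bhat q) (Set.Icc 0 qmax) (b + p/γ)) := by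
  have hG : G = satUtility γ b p := funext hG
  subst hG
  refine ⟨fun hbhat => ?_, fun hb hbhat => ?_, fun hbhat => ?_⟩ <;>
    refine IsMaxOn.on_subset (isMaxOn_univ_iff.mpr fun q => ?_) (subset_univ _)
  · have := isMaxOn_univ_iff.mp (satUtility.isMaxOn_sub_mul (b := b) hγ hp.le) q
    rw [max_eq_right hbhat]
    linarith [mul_le_mul_of_nonneg_left (le_max_right bhat q) hp.le]
  · rw [max_self]
    rcases le_total q bhat with hq | hq
    · rw [max_eq_left hq]
      linarith [satUtility.monotone (b := b) (p := p) hγ hq]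
    · rw [max_eq_right hq]
      exact satUtility.antitoneOn_sub_mul hγ hp.le (mem_Ici.2 hb.le) (mem_Ici.2 (hb.le.trans hq)) hq
  · have := isMaxOn_univ_iff.mp (satUtility.isMaxOn_saturation (b := b) (p := p) hγ) q
    rw [max_eq_left hbhat.le]
    linarith [mul_le_mul_of_nonneg_left (le_max_left bhat q) hp.le]

/-- maximizer of H(q) = G(q) - p·max(bhat, q) over [0, q_max], by cases on bhat. -/
theorem stmt2 (γ b p qmax bhat : ℝ) (hγ : 0 < γ) (hb : 0 < b) (hp : 0 < p)
    (hqmax : b + p / γ < qmax) (hbhat : bhat ∈ Set.Icc (0:ℝ) qmax)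
    (G : ℝ → ℝ)
    (hG : ∀ q, G q = if q ≤ b + p / γ then -γ/2 * q^2 + (γ*b + p) * q
                     else p^2/(2*γ) + γ*b^2/2 + p*b) :
    (bhat ≤ b → IsMaxOn (fun q => G q - p * max bhat q) (Set.Icc 0 qmax) b) ∧
    (b < bhat → bhat ≤ b + p/γ → IsMaxOn (fun q => G q - p * max bhat q) (Set.Icc 0 qmax) bhat) ∧
    (b + p/γ < bhat → IsMaxOn (fun q => G q - p * max bhat q) (Set.Icc 0 qmax) (b + p/γ)) :=
  stmt2_general γ b p qmax bhat hγ hp G hG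
end

section
/- Let γ > 0, b > p₂/γ, p > 0, p₂ ≥ p, q_max > b + p/γ. Suppose the consumer reports baseline b̂ with b - p₂/γ ≤ b̂ ≤ q_max and reduced consumption q̂ with b - 2p₂/γ ≤ q̂ ≤ min(b̂, b). Then the maximizer of H(q) = G(q) - pq + p₂·max(b̂ - q, 0) - p₂·|q - q̂| over q ∈ [0, q_max] is q* = q̂, where G is the piecewise-quadratic utility with parameters γ, b, p. -/
/-!
Write `F q = G q - p q`; it is concave with slope `max (γ (b - q)) (-p)`, increasing up to `b`.
Below `q̂` the two penalty terms cancel, leaving `F` plus a constant, so `F q ≤ F q̂` as `q̂ ≤ b`.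
Above `q̂` the objective loses `2 p₂` per unit up to `b̂` and `p₂` per unit beyond it, while `F`
gains at most `γ (b - q̂) ≤ 2 p₂` per unit after `q̂` and at most `max (γ (b - b̂)) (-p) ≤ p₂`
per unit after `b̂`.
-/

open Set

noncomputable def netUtility (γ b p q : ℝ) : ℝ :=
  (if q ≤ b + p / γ then -γ / 2 * q ^ 2 + (γ * b + p) * q
    else p ^ 2 / (2 * γ) + γ * b ^ 2 / 2 + p * b) - p * q

section netUtility

variable {γ b p x y s : ℝ}

lemma netUtility_of_le (h : x ≤ b + p / γ) : netUtility γ b p x = γ * b * x - γ / 2 * x ^ 2 := by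
  rw [netUtility, if_pos h]
  ring

lemma netUtility_of_lt (hγ : 0 < γ) (h : b + p / γ < x) :
    netUtility γ b p x = netUtility γ b p (b + p / γ) - p * (x - (b + p / γ)) := by
  rw [netUtility, if_neg h.not_ge, netUtility_of_le le_rfl]
  field_simp
  ring

lemma netUtility_sub_of_le (hy : y ≤ b + p / γ) (hxy : x ≤ y) :
    netUtility γ b p y - netUtility γ b p x = γ * (y - x) * (b - (x + y) / 2) := by
  rw [netUtility_of_le hy, netUtility_of_le (hxy.trans hy)]
  ring

lemma monotoneOn_netUtility (hγ : 0 < γ) (hp : 0 ≤ p) : MonotoneOn (netUtility γ b p) (Iic b) :=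
  fun x hx y hy hxy => by
    have hb : b ≤ b + p / γ := le_add_of_nonneg_right (div_nonneg hp hγ.le)
    have := netUtility_sub_of_le (p := p) (mem_Iic.mp hy |>.trans hb) hxy
    nlinarith [mul_nonneg hγ.le (sub_nonneg.mpr hxy), mem_Iic.mp hx, mem_Iic.mp hy]

lemma netUtility_sub_le (hγ : 0 < γ) (hxy : x ≤ y) (hsx : b - s / γ ≤ x) (hsp : -p ≤ s) :
    netUtility γ b p y - netUtility γ b p x ≤ s * (y - x) := by
  have hslope : (b - x) * γ ≤ s := (le_div_iff₀ hγ).mp (by linarith)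
  rcases le_or_gt y (b + p / γ) with hy | hy
  · rw [netUtility_sub_of_le hy hxy]
    nlinarith [mul_nonneg hγ.le (sub_nonneg.mpr hxy)]
  rw [netUtility_of_lt hγ hy]
  rcases le_or_gt x (b + p / γ) with hx | hx
  · have := netUtility_sub_of_le (γ := γ) (b := b) le_rfl hx
    nlinarith [mul_nonneg hγ.le (sub_nonneg.mpr hx)]
  · rw [netUtility_of_lt hγ hx]
    nlinarith

end netUtility

theorem stmt3_general (γ b p p₂ qmax bhat qhat : ℝ) (hγ : 0 < γ) (hp : 0 < p)
    (hp₂ : p ≤ p₂)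
    (hbhatl : b - p₂/γ ≤ bhat)
    (hqhatl : b - 2*p₂/γ ≤ qhat) (hqhatu : qhat ≤ min bhat b)
    (G : ℝ → ℝ)
    (hG : ∀ q, G q = if q ≤ b + p / γ then -γ/2 * q^2 + (γ*b + p) * q
                     else p^2/(2*γ) + γ*b^2/2 + p*b) :
    IsMaxOn (fun q => G q - p*q + p₂ * max (bhat - q) 0 - p₂ * |q - qhat|)
      (Set.Icc 0 qmax) qhat := by
  have hF : ∀ q, G q - p * q = netUtility γ b p q := fun q => by rw [hG]; rfl
  obtain ⟨hqbhat, hqb⟩ := le_min_iff.mp hqhatu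
  refine isMaxOn_iff.mpr fun q _ => ?_
  simp only [hF, sub_self, abs_zero, mul_zero, sub_zero, max_eq_left (sub_nonneg.mpr hqbhat)]
  rcases le_or_gt q qhat with hq | hq
  · have hrise := monotoneOn_netUtility hγ hp.le (hq.trans hqb) hqb hq
    rw [max_eq_left (by linarith), abs_of_nonpos (by linarith)]
    linarith
  rw [abs_of_pos (sub_pos.mpr hq)]
  rcases le_or_gt q bhat with hq' | hq'
  · have hrise := netUtility_sub_le (p := p) hγ hq.le hqhatl (by linarith)
    rw [max_eq_left (by linarith)]
    linarith
  · have hrise_to_bhat := netUtility_sub_le (p := p) hγ hqbhat hqhatl (by linarith)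
    have hrise_from_bhat := netUtility_sub_le (p := p) hγ hq'.le hbhatl (by linarith)
    rw [max_eq_right (by linarith)]
    linarith

/-- when called, the maximizer of
H(q) = G(q) - pq + p₂·max(bhat - q, 0) - p₂·|q - qhat| over [0, q_max] is q* = qhat. -/
theorem stmt3 (γ b p p₂ qmax bhat qhat : ℝ) (hγ : 0 < γ) (hb : p₂/γ < b) (hp : 0 < p)
    (hp₂ : p ≤ p₂) (hqmax : b + p / γ < qmax)
    (hbhatl : b - p₂/γ ≤ bhat) (hbhatu : bhat ≤ qmax)
    (hqhatl : b - 2*p₂/γ ≤ qhat) (hqhatu : qhat ≤ min bhat b)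
    (G : ℝ → ℝ)
    (hG : ∀ q, G q = if q ≤ b + p / γ then -γ/2 * q^2 + (γ*b + p) * q
                     else p^2/(2*γ) + γ*b^2/2 + p*b) :
    IsMaxOn (fun q => G q - p*q + p₂ * max (bhat - q) 0 - p₂ * |q - qhat|)
      (Set.Icc 0 qmax) qhat :=
  stmt3_general γ b p p₂ qmax bhat qhat hγ hp hp₂ hbhatl hqhatl hqhatu G hG
end

section
/- Let γ > 0, b > 0, p > 0, p₂ ≥ p, q_max > b + p/γ. Define the optimal expected profit J*(p_r) = γb²/2 + p_r·p₂²/(2γ(1-p_r)) for 0 ≤ p_r ≤ p/(p₂+p), and J*(p_r) = p²/(2γ) + bp - p·q_max + γb²/2 - p²p_r/(2γ) + p₂²p_r/(2γ) - b·p·p_r - b·p₂·p_r + p·q_max·p_r + p₂·q_max·p_r for p/(p₂+p) ≤ p_r ≤ 1. Then J* is monotonically nondecreasing in p_r on [0, 1). -/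
/-!
Both branches of `J*` are nondecreasing: the first because `x ↦ x / (1 - x)` increases on
`(-∞, 1)`, the second because it is affine with slope
`(p₂ + p) ((p₂ - p) / (2γ) + qmax - b) ≥ 0`. At the switching point `p / (p₂ + p)` the two
branches agree (both equal `p p₂ / (2γ)`), so the monotone pieces glue.
-/

open Set

lemma monotoneOn_mul_div_mul_one_sub {c k : ℝ} (hc : 0 ≤ c) (hk : 0 < k) :
    MonotoneOn (fun x => x * c / (k * (1 - x))) (Iio 1) := by
  intro x hx y hy hxy
  have hx' : 0 < k * (1 - x) := mul_pos hk (sub_pos.mpr hx)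
  have hy' : 0 < k * (1 - y) := mul_pos hk (sub_pos.mpr hy)
  simp only
  rw [div_le_div_iff₀ hx' hy']
  nlinarith [mul_nonneg (mul_nonneg hk.le hc) (sub_nonneg.mpr hxy)]

theorem stmt6_general (γ b p p₂ qmax : ℝ) (hγ : 0 < γ) (hp : 0 < p)
    (hp₂ : p ≤ p₂) (hqmax : b + p / γ < qmax)
    (Jstar : ℝ → ℝ)
    (hJ : ∀ pr, Jstar pr =
      if pr ≤ p/(p₂+p) then γ*b^2/2 + pr*p₂^2/(2*γ*(1-pr))
      else p^2/(2*γ) + b*p - p*qmax + γ*b^2/2 - p^2*pr/(2*γ) + p₂^2*pr/(2*γ)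
           - b*p*pr - b*p₂*pr + p*qmax*pr + p₂*qmax*pr) :
    MonotoneOn Jstar (Set.Ico 0 1) := by
  have hp₂pos : 0 < p₂ := hp.trans_le hp₂
  have hsum : 0 < p₂ + p := by linarith
  set t := p / (p₂ + p) with ht
  have ht0 : 0 ≤ t := by positivity
  have ht1 : t < 1 := (div_lt_one hsum).mpr (by linarith)
  have hbq : b ≤ qmax := by linarith [div_pos hp hγ]
  set f : ℝ → ℝ := fun pr => γ*b^2/2 + pr*p₂^2/(2*γ*(1-pr))
  set g : ℝ → ℝ := fun pr => p^2/(2*γ) + b*p - p*qmax + γ*b^2/2 - p^2*pr/(2*γ)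
    + p₂^2*pr/(2*γ) - b*p*pr - b*p₂*pr + p*qmax*pr + p₂*qmax*pr
  have hf : MonotoneOn f (Iio 1) :=
    (monotoneOn_mul_div_mul_one_sub (sq_nonneg p₂) (by positivity)).const_add _
  have hg : Monotone g := by
    have hslope : 0 ≤ (p₂ + p) * ((p₂ - p) / (2*γ) + (qmax - b)) :=
      mul_nonneg hsum.le (add_nonneg (div_nonneg (by linarith) (by positivity)) (by linarith))
    have hg_affine : g = fun pr =>
        (p^2/(2*γ) + b*p - p*qmax + γ*b^2/2) + (p₂ + p) * ((p₂ - p) / (2*γ) + (qmax - b)) * pr := by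
      funext pr; simp only [g]; ring
    rw [hg_affine]
    exact (monotone_id.const_mul hslope).const_add _
  have hfg : f t = g t := by
    have h1t : 1 - t = p₂ / (p₂ + p) := by rw [ht]; field_simp; ring
    simp only [f, g]
    rw [h1t, ht]
    field_simp
    ring
  have hJf : EqOn Jstar f (Icc 0 t) := fun pr hpr => by rw [hJ, if_pos hpr.2]
  have hJg : EqOn Jstar g (Ico t 1) := fun pr hpr => by
    rw [hJ]
    split_ifs with hle
    · rw [le_antisymm hle hpr.1]; exact hfg
    · rfl
  rw [← Icc_union_Ico_eq_Ico ht0 ht1]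
  exact MonotoneOn.union_right
    ((hf.mono fun x hx => hx.2.trans_lt ht1).congr hJf.symm) ((hg.monotoneOn _).congr hJg.symm)
    (isGreatest_Icc ht0) (isLeast_Ico ht1)

/-- the optimal expected profit J*(p_r) is nondecreasing on [0,1). -/
theorem stmt6 (γ b p p₂ qmax : ℝ) (hγ : 0 < γ) (hb : 0 < b) (hp : 0 < p)
    (hp₂ : p ≤ p₂) (hqmax : b + p / γ < qmax)
    (Jstar : ℝ → ℝ)
    (hJ : ∀ pr, Jstar pr =
      if pr ≤ p/(p₂+p) then γ*b^2/2 + pr*p₂^2/(2*γ*(1-pr))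
      else p^2/(2*γ) + b*p - p*qmax + γ*b^2/2 - p^2*pr/(2*γ) + p₂^2*pr/(2*γ)
           - b*p*pr - b*p₂*pr + p*qmax*pr + p₂*qmax*pr) :
    MonotoneOn Jstar (Set.Ico 0 1) :=
  stmt6_general γ b p p₂ qmax hγ hp hp₂ hqmax Jstar hJ
end

section
/- Let γ > 0, b > 0, p > 0, p₂ ≥ p, p_r ∈ [0, p/(p₂+p)]. The consumer's optimal reported baseline b̂* = b + p_r·p₂/(γ(1-p_r)) satisfies b ≤ b̂* ≤ b + p/γ; in particular, the overreporting amount p_r·p₂/(γ(1-p_r)) is bounded above by p/γ. -/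
open Set

/-- b ≤ bhat* ≤ b + p/γ; the overreporting amount p_r·p₂/(γ(1-p_r))
is bounded above by p/γ. -/
theorem stmt15 (γ b p p₂ pr : ℝ) (hγ : 0 < γ) (hb : 0 < b) (hp : 0 < p)
    (hp₂ : p ≤ p₂) (hpr : pr ∈ Set.Icc (0:ℝ) (p/(p₂+p))) :
    b ≤ b + pr*p₂/(γ*(1-pr)) ∧
    b + pr*p₂/(γ*(1-pr)) ≤ b + p/γ ∧
    pr*p₂/(γ*(1-pr)) ≤ p/γ := by
  obtain ⟨h0, h1⟩ := hpr
  have hsum : 0 < p₂ + p := by linarith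
  have hkey : pr * (p₂ + p) ≤ p := by
    calc pr * (p₂ + p) ≤ (p/(p₂+p)) * (p₂+p) := by nlinarith
    _ = p := by field_simp
  have hpr1 : pr < 1 := by nlinarith
  have hden : 0 < γ * (1 - pr) := mul_pos hγ (by linarith)
  have hnn : 0 ≤ pr*p₂/(γ*(1-pr)) := div_nonneg (by nlinarith) hden.le
  have hle : pr*p₂/(γ*(1-pr)) ≤ p/γ := by
    rw [div_le_div_iff₀ hden hγ]
    nlinarith
  exact ⟨by linarith, by linarith, hle⟩
end

section
/- Let γ > 0, b > 0, p > 0, p₂ ≥ p, b̂ ∈ [0, q_max], q̂ with b ≤ q̂ ≤ b̂. The maximizer of H(q) = G(q) - pq + p₂(b̂ - q)₊ - p₂|q - q̂| over q ∈ [0, min(q̂, b + p/γ)] (the region q ≤ q̂, q ≤ b̂, non-saturated) is q* = b, with optimal payoff b̂p₂ - p₂q̂ + γb²/2, where G(q) = -γq²/2 + (γb+p)q. -/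
open Set

/-- case j)1: when b ≤ qhat ≤ bhat, the maximizer of
H(q) = G(q) - pq + p₂(bhat-q)₊ - p₂|q - qhat| over [0, min(qhat, b + p/γ)] is q* = b,
with optimal payoff bhatp₂ - p₂qhat + γb²/2. -/
theorem stmt17 (γ b p p₂ qmax bhat qhat : ℝ) (hγ : 0 < γ) (hb : 0 < b) (hp : 0 < p)
    (hp₂ : p ≤ p₂) (hbhat : bhat ∈ Set.Icc (0:ℝ) qmax) (hqhatl : b ≤ qhat) (hqhatu : qhat ≤ bhat)
    (G : ℝ → ℝ)
    (hG : ∀ q, G q = -γ*q^2/2 + (γ*b + p)*q) :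
    IsMaxOn (fun q => G q - p*q + p₂ * max (bhat - q) 0 - p₂ * |q - qhat|)
      (Set.Icc 0 (min qhat (b + p/γ))) b ∧
    (fun q => G q - p*q + p₂ * max (bhat - q) 0 - p₂ * |q - qhat|) b
      = bhat*p₂ - p₂*qhat + γ*b^2/2 := by
  have hbval : G b - p*b + p₂ * max (bhat - b) 0 - p₂ * |b - qhat|
      = bhat*p₂ - p₂*qhat + γ*b^2/2 := by
    rw [hG, max_eq_left (by linarith), abs_of_nonpos (by linarith)]
    ring
  constructor
  · intro q hq
    simp only [Set.mem_Icc, le_min_iff] at hq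
    obtain ⟨h0, hq1, hq2⟩ := hq
    simp only [Set.mem_setOf_eq]
    rw [hG, max_eq_left (by linarith), abs_of_nonpos (by linarith), hbval]
    nlinarith [sq_nonneg (q - b)]
  · exact hbval
end
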